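/- Every subcubic tree with at least 7 leaves has an edge whose removal partitions the set of leaves into two sets each of size at least 3. -/

import Mathlib

open SimpleGraph

/-- Size of a maximum matching in the bipartite graph of edges of `G` crossing `(A, Aᶜ)`. -/
noncomputable def mmVal {V : Type*} (G : SimpleGraph V) (A : Set V) : ℕ :=
  sSup {n | ∃ M : Finset (V × V),
    (∀ p ∈ M, p.1 ∈ A ∧ p.2 ∉ A ∧ G.Adj p.1 p.2) ∧
    (∀ p ∈ M, ∀ q ∈ M, p ≠ q → p.1 ≠ q.1 ∧ p.2 ≠ q.2) ∧ M.card = n}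

/-- A branch-decomposition over the vertex set of `G`: a finite subcubic tree together with a
bijection between its leaves and the vertices of `G`. -/
structure BranchDecomp {V : Type*} (G : SimpleGraph V) where
  B : Type
  finB : Finite B
  T : SimpleGraph B
  isTree : T.IsTree
  subcubic : ∀ b : B, (T.neighborSet b).ncard = 1 ∨ (T.neighborSet b).ncard = 3
  L : {b : B // (T.neighborSet b).ncard = 1} ≃ V

/-- The set of vertices of `G` whose leaves lie on the `u`-side of the tree edge `uw`. -/
noncomputable def BranchDecomp.side {V : Type*} {G : SimpleGraph V} (D : BranchDecomp G)
    (u w : D.B) : Set V :=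
  {x : V | (D.T.deleteEdges {s(u, w)}).Reachable (D.L.symm x).1 u}

/-- The width of a branch-decomposition is at most `k`. -/
def BranchDecomp.widthLE {V : Type*} {G : SimpleGraph V} (D : BranchDecomp G) (k : ℕ) : Prop :=
  ∀ u w : D.B, D.T.Adj u w → mmVal G (D.side u w) ≤ k

/-- The maximum matching width of `G`. -/
noncomputable def mmw {V : Type*} (G : SimpleGraph V) : ℕ :=
  sInf {k | ∃ D : BranchDecomp G, D.widthLE k}
/-- `H` is a minor of `G`: there is a family of nonempty, pairwise disjoint, connected branch
sets in `G` indexed by the vertices of `H`, with edges of `H` realized by edges of `G`. -/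
def IsMinor {W : Type*} {V : Type*} (H : SimpleGraph W) (G : SimpleGraph V) : Prop :=
  ∃ φ : W → Set V,
    (∀ w, (φ w).Nonempty) ∧
    (∀ w, (G.induce (φ w)).Connected) ∧
    (∀ w w', w ≠ w' → Disjoint (φ w) (φ w')) ∧
    (∀ w w', H.Adj w w' → ∃ a ∈ φ w, ∃ b ∈ φ w', G.Adj a b)

/-- The `k × k` grid graph: vertices `(i, j)`, edges between vertices at Manhattan distance 1. -/
def gridGraph (k : ℕ) : SimpleGraph (Fin k × Fin k) :=
  SimpleGraph.fromRel (fun p q =>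
    (p.1 = q.1 ∧ (p.2 : ℕ) + 1 = (q.2 : ℕ)) ∨ (p.2 = q.2 ∧ (p.1 : ℕ) + 1 = (q.1 : ℕ)))

/-- The row `R_j` of the `k × k` grid. -/
def gridRow (k : ℕ) (j : Fin k) : Set (Fin k × Fin k) := {p | p.2 = j}

/-- The column `C_i` of the `k × k` grid. -/
def gridCol (k : ℕ) (i : Fin k) : Set (Fin k × Fin k) := {p | p.1 = i}

/-- `X` is small: `mm(X) < k` and `X` contains no full row. -/
def GridSmall (k : ℕ) (X : Set (Fin k × Fin k)) : Prop :=
  mmVal (gridGraph k) X < k ∧ ∀ j : Fin k, ¬ gridRow k j ⊆ X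

/-- `G` is `k`-connected: `|V(G)| ≥ k` and deleting fewer than `k` vertices leaves `G`
connected. -/
def KConnected {V : Type*} (k : ℕ) (G : SimpleGraph V) : Prop :=
  k ≤ Nat.card V ∧ ∀ X : Set V, X.ncard < k → (G.induce Xᶜ).Connected

/-- A block of `G`: a bridge (with its two endpoints), or a maximal 2-connected induced
subgraph. -/
def IsBlock {V : Type*} (G : SimpleGraph V) (Bs : Set V) : Prop :=
  (∃ a b : V, G.Adj a b ∧ G.IsBridge s(a, b) ∧ Bs = {a, b}) ∨
  (KConnected 2 (G.induce Bs) ∧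
    ∀ B' : Set V, Bs ⊆ B' → KConnected 2 (G.induce B') → B' = Bs)

/-- A tree-representation of `G`: a finite subcubic tree `T` and nontrivial subtrees `F x`
for each vertex `x` such that adjacent vertices have intersecting subtrees. -/
structure TreeRep {V : Type*} (G : SimpleGraph V) where
  B : Type
  finB : Finite B
  T : SimpleGraph B
  isTree : T.IsTree
  subcubic : ∀ b : B, (T.neighborSet b).ncard = 1 ∨ (T.neighborSet b).ncard = 3
  F : V → Set B
  nontrivial : ∀ x : V, ∃ u w : B, u ∈ F x ∧ w ∈ F x ∧ T.Adj u w
  subtree : ∀ x : V, (T.induce (F x)).Connected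
  adjMeet : ∀ x y : V, G.Adj x y → (F x ∩ F y).Nonempty

/-- Every edge of the tree lies in at most `k` of the subtrees. -/
def TreeRep.widthLE {V : Type*} {G : SimpleGraph V} (R : TreeRep G) (k : ℕ) : Prop :=
  ∀ u w : R.B, R.T.Adj u w → {x : V | u ∈ R.F x ∧ w ∈ R.F x}.ncard ≤ k

/-- Contraction of the edge `uv` of `G` (the merged vertex is `u`). -/
def contractEdge {V : Type*} (G : SimpleGraph V) (u v : V) : SimpleGraph {x : V // x ≠ v} :=
  SimpleGraph.fromRel (fun x y =>
    G.Adj x.1 y.1 ∨ (x.1 = u ∧ G.Adj v y.1) ∨ (y.1 = u ∧ G.Adj v x.1))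

/-!
For an edge `uw` let `n(u, w)` be the number of leaves on the `u`-side, so that
`n(u, w) + n(w, u)` is the number of leaves. Take an edge minimising `max (n(u, w)) (n(w, u))`.
If, say, `n(u, w) ≤ 2`, then `n(w, u) ≥ 5`, so `w` is not a leaf and its two other neighbours
`a`, `b` split the `w`-side: `n(w, u) = n(a, w) + n(b, w)`, both terms positive because every side
of an edge of a finite tree contains a leaf. With `n(b, w) ≤ n(a, w)`, the edge `wa` has
`n(a, w) < n(w, u)` and `n(w, a) = n(u, w) + n(b, w) ≤ 2 + n(w, u) / 2 < n(w, u)`, contradicting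
minimality.
-/

lemma Set.exists_eq_insert_pair_of_mem_of_ncard_eq_three {α : Type*} {s : Set α} {w : α}
    (hw : w ∈ s) (hs : s.ncard = 3) : ∃ a b, a ≠ b ∧ a ≠ w ∧ b ≠ w ∧ s = {w, a, b} := by
  obtain ⟨a, b, hab, hsab⟩ := Set.ncard_eq_two.mp (by rw [Set.ncard_sdiff_singleton_of_mem hw, hs])
  have ha : a ∈ s \ {w} := by simp [hsab]
  have hb : b ∈ s \ {w} := by simp [hsab]
  refine ⟨a, b, hab, ha.2, hb.2, ?_⟩
  rw [← hsab, Set.insert_sdiff_singleton, Set.insert_eq_of_mem hw]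

namespace SimpleGraph

variable {V : Type*} {G : SimpleGraph V} {u w x a b : V}

def leafSet (G : SimpleGraph V) : Set V := {v | (G.neighborSet v).ncard = 1}

def edgeSide (G : SimpleGraph V) (u w : V) : Set V := {x | (G.deleteEdges {s(u, w)}).Reachable x u}

lemma mem_edgeSide_self : u ∈ G.edgeSide u w := Reachable.refl u

lemma mem_edgeSide_swap : x ∈ G.edgeSide w u ↔ (G.deleteEdges {s(u, w)}).Reachable x w := by
  rw [edgeSide, Sym2.eq_swap]; rfl

lemma Reachable.deleteEdges_reachable_or (h : G.Reachable x u) (w : V) :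
    (G.deleteEdges {s(u, w)}).Reachable x u ∨ (G.deleteEdges {s(u, w)}).Reachable x w := by
  obtain ⟨p⟩ := h
  induction p with
  | nil => exact Or.inl .rfl
  | @cons x y u hxy _ ih =>
    by_cases he : s(x, y) = s(u, w)
    · rcases Sym2.eq_iff.mp he with ⟨rfl, -⟩ | ⟨rfl, -⟩
      · exact Or.inl .rfl
      · exact Or.inr .rfl
    · have hxy' : (G.deleteEdges {s(u, w)}).Adj x y := by simp [hxy, he]
      exact ih.imp hxy'.reachable.trans hxy'.reachable.trans

lemma Connected.mem_edgeSide_or (hG : G.Connected) (u w x : V) :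
    x ∈ G.edgeSide u w ∨ x ∈ G.edgeSide w u :=
  ((hG x u).deleteEdges_reachable_or w).imp id mem_edgeSide_swap.mpr

lemma IsAcyclic.not_reachable_deleteEdges (hG : G.IsAcyclic) (h : G.Adj u w) :
    ¬ (G.deleteEdges {s(u, w)}).Reachable u w :=
  isAcyclic_iff_forall_adj_isBridge.mp hG h

lemma IsAcyclic.disjoint_edgeSide (hG : G.IsAcyclic) (h : G.Adj u w) :
    Disjoint (G.edgeSide u w) (G.edgeSide w u) :=
  Set.disjoint_left.mpr fun _ hu hw ↦
    hG.not_reachable_deleteEdges h (hu.symm.trans (mem_edgeSide_swap.mp hw))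

lemma IsTree.isCompl_edgeSide (hG : G.IsTree) (h : G.Adj u w) :
    IsCompl (G.edgeSide u w) (G.edgeSide w u) :=
  ⟨hG.isAcyclic.disjoint_edgeSide h, codisjoint_iff.mpr <|
    Set.eq_univ_of_forall fun x ↦ hG.connected.mem_edgeSide_or u w x⟩

lemma Walk.eq_or_exists_mem_edges_reachable_deleteEdges (p : G.Walk x u) :
    x = u ∨ ∃ a, G.Adj u a ∧ s(a, u) ∈ p.edges ∧ (G.deleteEdges {s(a, u)}).Reachable x a := by
  induction p with
  | nil => exact Or.inl rfl
  | @cons x y u hxy q ih =>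
    by_cases hxu : x = u
    · exact Or.inl hxu
    right
    rcases ih with rfl | ⟨a, hua, hq, hya⟩
    · exact ⟨x, hxy.symm, by simp, .rfl⟩
    refine ⟨a, hua, by simp [hq], ?_⟩
    by_cases hxa : x = a
    · exact hxa ▸ .rfl
    have hxy' : (G.deleteEdges {s(a, u)}).Adj x y := by
      simp only [deleteEdges_adj, Set.mem_singleton_iff, Sym2.eq_iff]
      tauto
    exact hxy'.reachable.trans hya

lemma edgeSide_subset_insert_biUnion :
    G.edgeSide u w ⊆ insert u (⋃ a ∈ G.neighborSet u \ {w}, G.edgeSide a u) := by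
  intro x hx
  obtain ⟨p, hp⟩ := reachable_deleteEdges_iff_exists_walk.mp hx
  rcases p.eq_or_exists_mem_edges_reachable_deleteEdges with rfl | ⟨a, hua, hpa, hxa⟩
  · exact Or.inl rfl
  · refine Or.inr (Set.mem_biUnion ⟨hua, fun haw ↦ hp ?_⟩ hxa)
    rwa [Set.mem_singleton_iff.mp haw, Sym2.eq_swap] at hpa

lemma IsAcyclic.edgeSide_subset (hG : G.IsAcyclic) (hua : G.Adj u a) (haw : a ≠ w) :
    G.edgeSide a u ⊆ G.edgeSide u w := by
  classical
  rintro x ⟨p⟩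
  by_cases hu : u ∈ p.support
  · exact absurd (p.dropUntil u hu).reachable.symm (hG.not_reachable_deleteEdges hua.symm)
  · have hxa : (G.deleteEdges {s(u, w)}).Reachable x a := by
      refine ⟨p.transfer _ fun e he ↦ ?_⟩
      have he' := p.edges_subset_edgeSet he
      rw [edgeSet_deleteEdges] at he' ⊢
      refine ⟨he'.1, fun heq ↦ hu ?_⟩
      rw [Set.mem_singleton_iff.mp heq] at he
      exact p.fst_mem_support_of_mem_edges he
    have hau : (G.deleteEdges {s(u, w)}).Adj a u := by
      simp [hua.symm, haw, hua.ne']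
    exact hxa.trans hau.reachable

lemma IsAcyclic.edgeSide_eq_insert_biUnion (hG : G.IsAcyclic) :
    G.edgeSide u w = insert u (⋃ a ∈ G.neighborSet u \ {w}, G.edgeSide a u) :=
  edgeSide_subset_insert_biUnion.antisymm <| Set.insert_subset mem_edgeSide_self <|
    Set.iUnion₂_subset fun _ ha ↦ hG.edgeSide_subset ha.1 ha.2

lemma IsAcyclic.edgeSide_ssubset (hG : G.IsAcyclic) (hua : G.Adj u a) (haw : a ≠ w) :
    G.edgeSide a u ⊂ G.edgeSide u w :=
  (hG.edgeSide_subset hua haw).ssubset_of_mem_notMem mem_edgeSide_self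
    fun hu ↦ (hG.disjoint_edgeSide hua).notMem_of_mem_left mem_edgeSide_self hu

noncomputable def sideLeafCount (G : SimpleGraph V) (u w : V) : ℕ :=
  (G.leafSet ∩ G.edgeSide u w).ncard

lemma sideLeafCount_le_one_of_mem_leafSet (hw : w ∈ G.leafSet) (h : G.Adj w u) :
    G.sideLeafCount w u ≤ 1 := by
  have hN : G.neighborSet w \ {u} = ∅ := by
    obtain ⟨v, hv⟩ := Set.ncard_eq_one.mp hw
    have huv : u = v := by simpa [hv] using (G.mem_neighborSet w u).mpr h
    rw [hv, huv, Set.sdiff_self]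
  have hsub := (edgeSide_subset_insert_biUnion (G := G) (u := w) (w := u))
  rw [hN, Set.biUnion_empty, LawfulSingleton.insert_empty_eq] at hsub
  exact (Set.ncard_le_ncard (Set.inter_subset_right.trans hsub)).trans (Set.ncard_singleton w).le

section Finite

variable [Finite V]

lemma IsAcyclic.leafSet_inter_edgeSide_nonempty (hG : G.IsAcyclic) (huw : G.Adj u w) :
    (G.leafSet ∩ G.edgeSide u w).Nonempty := by
  induction h : (G.edgeSide u w).ncard using Nat.strong_induction_on generalizing u w with
  | _ n ih =>
    by_cases hu : u ∈ G.leafSet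
    · exact ⟨u, hu, mem_edgeSide_self⟩
    obtain ⟨a, hua, haw⟩ : ∃ a, G.Adj u a ∧ a ≠ w := by
      by_contra! hN
      exact hu (Set.ncard_eq_one.mpr ⟨w, Set.eq_singleton_iff_unique_mem.mpr ⟨huw, hN⟩⟩)
    obtain ⟨x, hx, hxa⟩ := ih _ (h ▸ Set.ncard_lt_ncard (hG.edgeSide_ssubset hua haw)) hua.symm rfl
    exact ⟨x, hx, hG.edgeSide_subset hua haw hxa⟩

lemma IsTree.sideLeafCount_add_sideLeafCount (hG : G.IsTree) (h : G.Adj u w) :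
    G.sideLeafCount u w + G.sideLeafCount w u = G.leafSet.ncard := by
  rw [sideLeafCount, sideLeafCount, ← (hG.isCompl_edgeSide h).compl_eq, ← Set.sdiff_eq,
    Set.ncard_inter_add_ncard_sdiff_eq_ncard]

lemma IsAcyclic.sideLeafCount_pos (hG : G.IsAcyclic) (h : G.Adj u w) : 0 < G.sideLeafCount u w :=
  (Set.ncard_pos (Set.toFinite _)).mpr (hG.leafSet_inter_edgeSide_nonempty h)

lemma IsAcyclic.sideLeafCount_eq_add (hG : G.IsAcyclic) (hN : G.neighborSet u = {w, a, b})
    (hab : a ≠ b) (haw : a ≠ w) (hbw : b ≠ w) :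
    G.sideLeafCount u w = G.sideLeafCount a u + G.sideLeafCount b u := by
  have hua : G.Adj u a := by simp [← G.mem_neighborSet, hN]
  have hub : G.Adj u b := by simp [← G.mem_neighborSet, hN]
  have hu : u ∉ G.leafSet := by
    simp only [leafSet, Set.mem_ofPred_eq, hN, Set.ncard_eq_three.mpr
      ⟨w, a, b, haw.symm, hbw.symm, hab, rfl⟩]
    omega
  have hNw : G.neighborSet u \ {w} = {a, b} := by
    rw [hN, Set.insert_sdiff_self_of_notMem (by simp [haw.symm, hbw.symm])]
  rw [sideLeafCount, hG.edgeSide_eq_insert_biUnion, hNw, Set.biUnion_pair,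
    Set.inter_insert_of_notMem hu, Set.inter_union_distrib_left, Set.ncard_union_eq]
  · rfl
  · exact ((hG.disjoint_edgeSide hub).mono_left (hG.edgeSide_subset hua hab)).mono
      Set.inter_subset_right Set.inter_subset_right

lemma IsTree.exists_adj_max_sideLeafCount_lt (hG : G.IsTree)
    (hw : (G.neighborSet w).ncard = 1 ∨ (G.neighborSet w).ncard = 3)
    (hL : 7 ≤ G.leafSet.ncard) (huw : G.Adj u w) (hu : G.sideLeafCount u w ≤ 2) :
    ∃ a, G.Adj w a ∧ max (G.sideLeafCount w a) (G.sideLeafCount a w) < G.sideLeafCount w u := by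
  have hsum := hG.sideLeafCount_add_sideLeafCount huw
  rcases hw with hw1 | hw3
  · have := sideLeafCount_le_one_of_mem_leafSet hw1 huw.symm
    omega
  obtain ⟨a, b, hab, hau, hbu, hN⟩ :=
    Set.exists_eq_insert_pair_of_mem_of_ncard_eq_three ((G.mem_neighborSet w u).mpr huw.symm) hw3
  have hwa : G.Adj w a := by simp [← G.mem_neighborSet, hN]
  have hwb : G.Adj w b := by simp [← G.mem_neighborSet, hN]
  have hsplit := hG.isAcyclic.sideLeafCount_eq_add hN hab hau hbu
  have ha := hG.isAcyclic.sideLeafCount_pos hwa.symm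
  have hb := hG.isAcyclic.sideLeafCount_pos hwb.symm
  have hsa := hG.sideLeafCount_add_sideLeafCount hwa
  have hsb := hG.sideLeafCount_add_sideLeafCount hwb
  rcases le_total (G.sideLeafCount b w) (G.sideLeafCount a w) with h | h
  · exact ⟨a, hwa, by omega⟩
  · exact ⟨b, hwb, by omega⟩

end Finite

end SimpleGraph

/-- a subcubic tree with at least 7 leaves has an edge splitting the leaves into
two sets each of size at least 3. -/
theorem subcubic_tree_balanced_edge (B : Type) [Finite B] (T : SimpleGraph B)
    (htree : T.IsTree)
    (hsub : ∀ b : B, (T.neighborSet b).ncard = 1 ∨ (T.neighborSet b).ncard = 3)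
    (hleaves : 7 ≤ {b : B | (T.neighborSet b).ncard = 1}.ncard) :
    ∃ u w : B, T.Adj u w ∧
      3 ≤ {b : B | (T.neighborSet b).ncard = 1 ∧
            (T.deleteEdges {s(u, w)}).Reachable b u}.ncard ∧
      3 ≤ {b : B | (T.neighborSet b).ncard = 1 ∧
            (T.deleteEdges {s(u, w)}).Reachable b w}.ncard := by
  obtain ⟨v, hv⟩ := Set.nonempty_of_ncard_ne_zero (s := T.leafSet) (by unfold leafSet; omega)
  obtain ⟨v', hvv'⟩ := Set.nonempty_of_ncard_ne_zero (s := T.neighborSet v) (by rw [hv]; omega)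
  have : Nonempty {p : B × B // T.Adj p.1 p.2} := ⟨⟨(v, v'), hvv'⟩⟩
  obtain ⟨⟨⟨u, w⟩, huw⟩, hmin⟩ := Finite.exists_min fun p : {p : B × B // T.Adj p.1 p.2} ↦
    max (T.sideLeafCount p.1.1 p.1.2) (T.sideLeafCount p.1.2 p.1.1)
  have balanced : ∀ x y, T.Adj x y →
      max (T.sideLeafCount x y) (T.sideLeafCount y x) ≤
        max (T.sideLeafCount u w) (T.sideLeafCount w u) → 3 ≤ T.sideLeafCount x y := by
    intro x y hxy hm
    by_contra! h
    obtain ⟨a, hya, hlt⟩ := htree.exists_adj_max_sideLeafCount_lt (hsub y) hleaves hxy (by omega)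
    have := hmin ⟨(y, a), hya⟩
    dsimp only at this
    omega
  refine ⟨u, w, huw, balanced u w huw le_rfl, ?_⟩
  rw [Sym2.eq_swap]
  exact balanced w u huw.symm (max_comm _ _).le
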